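/- Let a_1,…,a_n, b_1,…,b_m, c be letters of [n]' with m,n ≥ 1. (1) If b_m < ⋯ < b_1 < c < a_1 < ⋯ < a_n in standardization order, then c a_1 ⋯ a_n b_1 ⋯ b_m ≡_k c b_1 ⋯ b_m a_1 ⋯ a_n. (2) If a_1 < ⋯ < a_n < c < b_m < ⋯ < b_1 in standardization order, then a_1 ⋯ a_n b_1 ⋯ b_m c ≡_k b_1 ⋯ b_m a_1 ⋯ a_n c. -/

import Mathlib

/- # Shifted tableaux, words, shifted Knuth equivalence, and the
     Gillespie–Levinson–Purbhoo shifted tableau crystal -/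

open scoped Classical

namespace ST

/-- A letter `i` or `i'` of the primed alphabet: `val` is `i`, `primed` tells whether it is `i'`. -/
structure PLetter where
  val : ℕ
  primed : Bool
deriving DecidableEq

/-- A word (string) in the primed alphabet. -/
abbrev Word := List PLetter

/-- A (skew) shifted filling: an `Option`-valued assignment on the grid
(rows and columns indexed from `0`); `none` means "no box". -/
abbrev Tab := ℕ → ℕ → Option PLetter

def dummy : PLetter := ⟨0, false⟩

/-- The strict order `1' < 1 < 2' < 2 < ⋯` on the primed alphabet (Bool-valued). -/
def pltb (a b : PLetter) : Bool :=
  decide (a.val < b.val) || (decide (a.val = b.val) && a.primed && !b.primed)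

/-- The strict order `1' < 1 < 2' < 2 < ⋯` on the primed alphabet. -/
def plt (a b : PLetter) : Prop := pltb a b = true

/-- The standardization order on letters-with-positions: equal primed letters are
read right-to-left, equal unprimed letters left-to-right (Bool-valued). -/
def sLTb (p q : PLetter × ℕ) : Bool :=
  pltb p.1 q.1 ||
    (decide (p.1 = q.1) &&
      ((p.1.primed && decide (q.2 < p.2)) || (!p.1.primed && decide (p.2 < q.2))))

/-- The standardization order on letters-with-positions. -/
def sLT (p q : PLetter × ℕ) : Prop := sLTb p q = true

/-- The standardization of a word: position `i` receives rank
`1 +` the number of positions standardization-smaller than it. -/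
def stdOf (w : Word) : List ℕ :=
  (List.range w.length).map (fun i =>
    ((List.range w.length).filter
      (fun j => sLTb (w.getD j dummy, j) (w.getD i dummy, i))).length + 1)

/-- The weight of a word: the number of letters equal to `v` or `v'`. -/
def wtw (w : Word) (v : ℕ) : ℕ := (w.filter (fun a => a.val == v)).length

/-- Canonical form of a string: the first occurrence of each value is unprimed. -/
def canonize (w : Word) : Word :=
  w.mapIdx (fun idx a =>
    if List.findIdx (fun x => x.val == a.val) w = idx then ⟨a.val, false⟩ else a)

/-! ## Shifted Knuth equivalence -/

/-- The Knuth moves (K1), (K2) (conditions in the standardization order, which for equal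
letters is determined by the relative positions in the pattern). -/
inductive KMoveK : Word → Word → Prop
  | K1 (x y : Word) (a b c : PLetter)
      (h1 : sLT (a, 1) (b, 0)) (h2 : sLT (b, 0) (c, 2)) :
      KMoveK (x ++ [b, a, c] ++ y) (x ++ [b, c, a] ++ y)
  | K2 (x y : Word) (a b c : PLetter)
      (h1 : sLT (a, 0) (b, 2)) (h2 : sLT (b, 2) (c, 1)) :
      KMoveK (x ++ [a, c, b] ++ y) (x ++ [c, a, b] ++ y)

/-- All shifted Knuth moves: (K1), (K2), and the initial moves (S1), (S2). -/
inductive KMove : Word → Word → Prop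
  | ofK {w v : Word} : KMoveK w v → KMove w v
  | S1 (y : Word) (a b : PLetter) : KMove (a :: b :: y) (b :: a :: y)
  | S2 (y : Word) (v : ℕ) :
      KMove (⟨v, false⟩ :: ⟨v, false⟩ :: y) (⟨v, false⟩ :: ⟨v, true⟩ :: y)

/-- Shifted Knuth equivalence of words. -/
inductive KnuthEquiv : Word → Word → Prop
  | refl (w : Word) : KnuthEquiv w w
  | move {w v : Word} : KMove w v → KnuthEquiv w v
  | symm {w v : Word} : KnuthEquiv w v → KnuthEquiv v w
  | trans {w u v : Word} : KnuthEquiv w u → KnuthEquiv u v → KnuthEquiv w v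

/-- Equivalence generated by the moves (K1) and (K2) only. -/
inductive KnuthEquivK : Word → Word → Prop
  | refl (w : Word) : KnuthEquivK w w
  | move {w v : Word} : KMoveK w v → KnuthEquivK w v
  | symm {w v : Word} : KnuthEquivK w v → KnuthEquivK v w
  | trans {w u v : Word} : KnuthEquivK w u → KnuthEquivK u v → KnuthEquivK w v

/-! ## Shifted shapes and tableaux -/

/-- A strict partition, as a strictly decreasing list of positive integers. -/
def StrictPart (l : List ℕ) : Prop := l.Chain' (· > ·) ∧ ∀ x ∈ l, 0 < x

/-- Containment of strict partitions. -/
def SubShape (mu lam : List ℕ) : Prop := ∀ k, mu.getD k 0 ≤ lam.getD k 0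

/-- The cells of the skew shifted shape `lam/mu` (`0`-indexed; row `i` is shifted `i`
units to the right). -/
def inC (lam mu : List ℕ) (i j : ℕ) : Prop :=
  i + mu.getD i 0 ≤ j ∧ j < i + lam.getD i 0

instance (lam mu : List ℕ) (i j : ℕ) : Decidable (inC lam mu i j) := by
  unfold inC; infer_instance

/-- The weight of a filling: the number of boxes filled with `v` or `v'`. -/
noncomputable def wtT (T : Tab) (v : ℕ) : ℕ := Set.ncard {p : ℕ × ℕ | ∃ b, T p.1 p.2 = some ⟨v, b⟩}

/-- `p` comes strictly before `q` in reading order (rows bottom to top,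
left to right within a row). -/
def readBef (p q : ℕ × ℕ) : Prop := q.1 < p.1 ∨ (p.1 = q.1 ∧ p.2 < q.2)

/-- `T` is a shifted semistandard tableau of shape `lam/mu` on the alphabet `[n]'`,
in canonical form: boxes exactly on the cells of `lam/mu`; values between `1` and `n`;
rows and columns weakly increase, with at most one `i'` per row (equal row-adjacent
entries are unprimed) and at most one `i` per column (equal column-adjacent entries
are primed); and the first occurrence of each value in reading order is unprimed. -/
def IsShST (lam mu : List ℕ) (n : ℕ) (T : Tab) : Prop :=
  (∀ i j, T i j ≠ none ↔ inC lam mu i j) ∧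
  (∀ i j a, T i j = some a → 1 ≤ a.val ∧ a.val ≤ n) ∧
  (∀ i j a b, T i j = some a → T i (j+1) = some b → plt a b ∨ (a = b ∧ a.primed = false)) ∧
  (∀ i j a b, T i j = some a → T (i+1) j = some b → plt a b ∨ (a = b ∧ a.primed = true)) ∧
  (∀ i j v, T i j = some ⟨v, true⟩ →
    ∃ p : ℕ × ℕ, ∃ b, readBef p (i, j) ∧ T p.1 p.2 = some ⟨v, b⟩)

/-- The Yamanouchi tableau `Y_ν`: row `i` is filled with unprimed `i`'s (rows `1`-indexed). -/
def Yam (nu : List ℕ) : Tab := fun i j =>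
  if inC nu [] i j then some ⟨i + 1, false⟩ else none

/-- The cells of `lam/mu` listed in reading order (bottom row first, left to right). -/
def readCells (lam mu : List ℕ) : List (ℕ × ℕ) :=
  ((List.range lam.length).reverse).foldr
    (fun i acc =>
      ((List.range' (i + mu.getD i 0) (lam.getD i 0 - mu.getD i 0)).map (fun j => (i, j)))
        ++ acc) []

/-- The (row) reading word of a tableau of shape `lam/mu`. -/
def readWordT (lam mu : List ℕ) (T : Tab) : Word :=
  (readCells lam mu).filterMap (fun p => T p.1 p.2)

/-- The reading word of any filling supported in the square `[0,B)²`
(rows bottom to top, left to right). -/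
def readWordB (B : ℕ) (T : Tab) : Word :=
  ((List.range B).reverse).foldr
    (fun i acc => ((List.range B).filterMap (fun j => T i j)) ++ acc) []

/-- Refill the shape `lam/mu` with a given word, in reading order. -/
def fillTab (lam mu : List ℕ) (w : Word) : Tab := fun i j =>
  if inC lam mu i j then w[(readCells lam mu).idxOf (i, j)]? else none

/-! ## Primed crystal operators (on words, then on tableaux) -/

/-- The primed lowering operator `F_i'` on words: the unique word in canonical form with
the same standardization and weight decreased by `α_i = e_i - e_{i+1}`. -/
noncomputable def FpW (i : ℕ) (w : Word) : Option Word :=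
  if h : ∃ v : Word, canonize v = v ∧ stdOf v = stdOf w ∧
      (∀ x, wtw v x =
        if x = i then wtw w x - 1 else if x = i + 1 then wtw w x + 1 else wtw w x) ∧
      1 ≤ wtw w i
  then some h.choose else none

/-- The primed raising operator `E_i'` on words. -/
noncomputable def EpW (i : ℕ) (w : Word) : Option Word :=
  if h : ∃ v : Word, canonize v = v ∧ stdOf v = stdOf w ∧
      (∀ x, wtw v x =
        if x = i then wtw w x + 1 else if x = i + 1 then wtw w x - 1 else wtw w x) ∧
      1 ≤ wtw w (i + 1)
  then some h.choose else none

/-! ## Lattice walks and the unprimed operators -/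

/-- One step of the lattice walk, for a letter of `{1',1,2',2}`. -/
def wstep (p : ℕ × ℕ) (a : PLetter) : ℕ × ℕ :=
  if p.1 = 0 ∨ p.2 = 0 then
    if a.val = 1 then (p.1 + 1, p.2) else (p.1, p.2 + 1)
  else
    if a.val = 1 then (if a.primed then (p.1 + 1, p.2) else (p.1, p.2 - 1))
    else (if a.primed then (p.1 - 1, p.2) else (p.1, p.2 + 1))

/-- The position of the lattice walk of `w` before the letter at index `k`. -/
def walkAt (w : Word) (k : ℕ) : ℕ × ℕ := (w.take k).foldl wstep (0, 0)

def l1 : PLetter := ⟨1, false⟩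
def l1p : PLetter := ⟨1, true⟩
def l2 : PLetter := ⟨2, false⟩
def l2p : PLetter := ⟨2, true⟩

/-- `w` has an `F₁`-critical substring starting at index `k`, of length `len`, and
transforming it yields `res` (`res = none` for type 5F). The five types
(patterns, locations and transformations) follow Gillespie–Levinson–Purbhoo. -/
def FcritRes (w : Word) (k len : ℕ) (res : Option Word) : Prop :=
  -- type 1F : 1(1')ᵗ2' ↦ 2'(1')ᵗ2, located at y = 0, or y = 1 with x ≥ 1
  (∃ t, (w.drop k).take len = l1 :: (List.replicate t l1p ++ [l2p]) ∧ len = t + 2 ∧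
      ((walkAt w k).2 = 0 ∨ ((walkAt w k).2 = 1 ∧ 1 ≤ (walkAt w k).1)) ∧
      res = some (w.take k ++ (l2p :: (List.replicate t l1p ++ [l2])) ++ w.drop (k + len))) ∨
  -- type 2F : 1(2)ᵗ1' ↦ 2'(2)ᵗ1, located at x = 0, or x = 1 with y ≥ 1
  (∃ t, (w.drop k).take len = l1 :: (List.replicate t l2 ++ [l1p]) ∧ len = t + 2 ∧
      ((walkAt w k).1 = 0 ∨ ((walkAt w k).1 = 1 ∧ 1 ≤ (walkAt w k).2)) ∧
      res = some (w.take k ++ (l2p :: (List.replicate t l2 ++ [l1])) ++ w.drop (k + len))) ∨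
  -- type 3F : 1 ↦ 2, located at y = 0
  ((w.drop k).take len = [l1] ∧ len = 1 ∧ (walkAt w k).2 = 0 ∧
      res = some (w.take k ++ [l2] ++ w.drop (k + 1))) ∨
  -- type 4F : 1' ↦ 2', located at x = 0
  ((w.drop k).take len = [l1p] ∧ len = 1 ∧ (walkAt w k).1 = 0 ∧
      res = some (w.take k ++ [l2p] ++ w.drop (k + 1))) ∨
  -- type 5F : a single 1 or 2' located at x = 1, y ≥ 1; the operator is undefined
  (((w.drop k).take len = [l1] ∨ (w.drop k).take len = [l2p]) ∧ len = 1 ∧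
      (walkAt w k).1 = 1 ∧ 1 ≤ (walkAt w k).2 ∧ res = none)

/-- `p = (v, k, len, res)` is a *final* `F₁`-critical substring for the word `w`:
`v` is a representative of `w`, with an `F₁`-critical substring at `k` of length `len`,
of maximal starting index, and longest among those. -/
def FinalCrit (w : Word) (p : Word × ℕ × ℕ × Option Word) : Prop :=
  canonize p.1 = w ∧ FcritRes p.1 p.2.1 p.2.2.1 p.2.2.2 ∧
  ∀ q : Word × ℕ × ℕ × Option Word,
    canonize q.1 = w → FcritRes q.1 q.2.1 q.2.2.1 q.2.2.2 →
      (q.2.1 < p.2.1 ∨ (q.2.1 = p.2.1 ∧ q.2.2.1 ≤ p.2.2.1))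

/-- The unprimed lowering operator `F₁` on words in the alphabet `{1',1,2',2}`. -/
noncomputable def F1 (w : Word) : Option Word :=
  if h : ∃ p : Word × ℕ × ℕ × Option Word, FinalCrit w p
  then h.choose.2.2.2.map canonize else none

/-- Is `a` a letter of `{i, i', i+1, (i+1)'}`? -/
def isCol (i : ℕ) (a : PLetter) : Bool := a.val == i || a.val == i + 1

/-- Relabel `{i,i+1}' → {1,2}'`. -/
def toCol (i : ℕ) (a : PLetter) : PLetter := ⟨a.val + 1 - i, a.primed⟩

/-- Relabel `{1,2}' → {i,i+1}'`. -/
def fromCol (i : ℕ) (a : PLetter) : PLetter := ⟨a.val + i - 1, a.primed⟩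

/-- The subword of letters `i, i', i+1, (i+1)'`, relabelled to the alphabet `{1,2}'`. -/
def subw (i : ℕ) (w : Word) : Word := (w.filter (isCol i)).map (toCol i)

/-- Replace, in order, the letters of colour `{i,i+1}` of the first word by
the (relabelled) letters of the second word. -/
def reinsert (i : ℕ) : Word → Word → Word
  | [], _ => []
  | a :: w, s =>
      if isCol i a then
        match s with
        | [] => a :: reinsert i w []
        | b :: s' => fromCol i b :: reinsert i w s'
      else a :: reinsert i w s

/-- The unprimed lowering operator `F_i` on words. -/
noncomputable def FW (i : ℕ) (w : Word) : Option Word :=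
  (F1 (subw i w)).map (fun s => canonize (reinsert i w s))

/-- Complementation of a word in the alphabet `{1,2}'`. -/
def compl2 (w : Word) : Word := w.map (fun a => ⟨3 - a.val, !a.primed⟩)

/-- The unprimed raising operator `E₁ = c₂ ∘ F₁ ∘ c₂` on words in `{1,2}'`. -/
noncomputable def E1 (w : Word) : Option Word :=
  (F1 (canonize (compl2 w))).map (fun u => canonize (compl2 u))

/-- The unprimed raising operator `E_i` on words. -/
noncomputable def EW (i : ℕ) (w : Word) : Option Word :=
  (E1 (subw i w)).map (fun s => canonize (reinsert i w s))

/-! ## The shifted tableau crystal `B(λ/μ, n)` -/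

/-- The unprimed lowering operator `F_i` on tableaux of shape `lam/mu`. -/
noncomputable def FT (lam mu : List ℕ) (i : ℕ) (T : Tab) : Option Tab :=
  (FW i (readWordT lam mu T)).map (fillTab lam mu)

/-- The primed lowering operator `F_i'` on tableaux of shape `lam/mu`. -/
noncomputable def FpT (lam mu : List ℕ) (i : ℕ) (T : Tab) : Option Tab :=
  (FpW i (readWordT lam mu T)).map (fillTab lam mu)

/-- The unprimed raising operator `E_i` on tableaux of shape `lam/mu`. -/
noncomputable def ET (lam mu : List ℕ) (i : ℕ) (T : Tab) : Option Tab :=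
  (EW i (readWordT lam mu T)).map (fillTab lam mu)

/-- The primed raising operator `E_i'` on tableaux of shape `lam/mu`. -/
noncomputable def EpT (lam mu : List ℕ) (i : ℕ) (T : Tab) : Option Tab :=
  (EpW i (readWordT lam mu T)).map (fillTab lam mu)

/-- An `{i,i'}`-coloured edge of the crystal (in either direction). -/
def edge (lam mu : List ℕ) (i : ℕ) (T U : Tab) : Prop :=
  FT lam mu i T = some U ∨ FpT lam mu i T = some U ∨
  FT lam mu i U = some T ∨ FpT lam mu i U = some T

/-- `T` and `U` lie in the same `i`-string. -/
def iStr (lam mu : List ℕ) (i : ℕ) : Tab → Tab → Prop :=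
  Relation.ReflTransGen (edge lam mu i)

/-- `T` and `U` lie in the same connected component of `B(λ/μ, n)`. -/
def Comp (lam mu : List ℕ) (n : ℕ) : Tab → Tab → Prop :=
  Relation.ReflTransGen (fun T U => ∃ i, 1 ≤ i ∧ i < n ∧ edge lam mu i T U)

/-- `T` and `U` lie in the same connected component of `B_{p,q}`
(edges coloured in `[p, q-1]` only). -/
def CompPQ (lam mu : List ℕ) (p q : ℕ) : Tab → Tab → Prop :=
  Relation.ReflTransGen (fun T U => ∃ i, p ≤ i ∧ i < q ∧ edge lam mu i T U)

/-- The `i`-string through `T` is collapsed: the operators `F_i` and `F_i'`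
coincide along it. -/
def CollapsedStr (lam mu : List ℕ) (i : ℕ) (T : Tab) : Prop :=
  ∀ U, iStr lam mu i T U → FT lam mu i U = FpT lam mu i U

/-- The `i`-string through `T` is separated: it consists of two `i`-labelled chains
connected by `i'`-labelled edges; equivalently, some `i'`-edge of the string
is not an `i`-edge. -/
def SeparatedStr (lam mu : List ℕ) (i : ℕ) (T : Tab) : Prop :=
  ∃ U V, iStr lam mu i T U ∧ FpT lam mu i U = some V ∧ FT lam mu i U ≠ some V

/-- Iterates of a partial operator. -/
def iterO (f : Tab → Option Tab) : ℕ → Tab → Option Tab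
  | 0, T => some T
  | k + 1, T => (iterO f k T).bind f

/-- Partial length function: the largest `k` such that the `k`-th iterate is defined. -/
noncomputable def plen (f : Tab → Option Tab) (T : Tab) : ℕ :=
  sSup {k | iterO f k T ≠ none}

/-- The total length function `φ_i(T)`: the `x`-coordinate of the endpoint of the
`i`-th lattice walk of the reading word of `T`. -/
def phiTot (lam mu : List ℕ) (i : ℕ) (T : Tab) : ℕ :=
  ((subw i (readWordT lam mu T)).foldl wstep (0, 0)).1

/-- The total length function `ε_i(T)`: the `y`-coordinate of the endpoint of the
`i`-th lattice walk of the reading word of `T`. -/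
def epsTot (lam mu : List ℕ) (i : ℕ) (T : Tab) : ℕ :=
  ((subw i (readWordT lam mu T)).foldl wstep (0, 0)).2

/-! ## The Schützenberger involution and evacuation -/

/-- Complementation of a letter within `[n]'`. -/
def compln (n : ℕ) (a : PLetter) : PLetter := ⟨n + 1 - a.val, !a.primed⟩

/-- The operator `c_n`: flip across the anti-diagonal of the ambient staircase
(of size `N`) while complementing the entries within `[n]'`. -/
def cnT (n N : ℕ) (T : Tab) : Tab := fun i j =>
  if i < N ∧ j < N then (T (N - 1 - j) (N - 1 - i)).map (compln n) else none

/-- The shifted evacuation `evac(T) = rect(c_n(T))` of a straight-shape tableau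
living inside the staircase of size `N`: the unique straight-shape shifted
semistandard tableau whose reading word is shifted Knuth equivalent to that
of `c_n(T)`. -/
noncomputable def evac (n N : ℕ) (T : Tab) : Tab :=
  Classical.epsilon (fun U => ∃ nu : List ℕ, StrictPart nu ∧ nu.headD 0 ≤ N ∧
    nu.length ≤ N ∧ IsShST nu [] n U ∧
    KnuthEquiv (canonize (readWordB N U)) (canonize (readWordB N (cnT n N T))))

/-- The characterizing properties of the Schützenberger (Lusztig) involution `η`
on `B(λ/μ, n)`: it maps the crystal to itself, intertwines `E_i, E_i', F_i, F_i'`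
with `F_{n-i}, F_{n-i}', E_{n-i}, E_{n-i}'`, and reverses the weight. -/
def EtaProps (lam mu : List ℕ) (n : ℕ) (η : Tab → Tab) : Prop :=
  ∀ T, IsShST lam mu n T →
    IsShST lam mu n (η T) ∧
    (∀ i, 1 ≤ i → i < n →
      EpT lam mu i (η T) = (FpT lam mu (n - i) T).map η ∧
      ET lam mu i (η T) = (FT lam mu (n - i) T).map η ∧
      FpT lam mu i (η T) = (EpT lam mu (n - i) T).map η ∧
      FT lam mu i (η T) = (ET lam mu (n - i) T).map η) ∧
    (∀ v, 1 ≤ v → v ≤ n → wtT (η T) v = wtT T (n + 1 - v))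

/-- The global specification of the Schützenberger involution for the alphabet `[n]'`. -/
def etaSpec (n : ℕ) (η : Tab → Tab) : Prop :=
  ∀ lam mu : List ℕ, StrictPart lam → StrictPart mu → SubShape mu lam →
    EtaProps lam mu n η

/-- The Schützenberger involution `η` for the alphabet `[n]'`
(evacuation on straight shapes, reversal on skew shapes). -/
noncomputable def eta (n : ℕ) : Tab → Tab := Classical.epsilon (etaSpec n)

/-- The subtableau `T^{p,q}` of entries with values in `[p,q]`, relabelled to `[q-p+1]'`. -/
def restrictT (p q : ℕ) (T : Tab) : Tab := fun i j =>
  (T i j).bind (fun a =>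
    if p ≤ a.val ∧ a.val ≤ q then some ⟨a.val + 1 - p, a.primed⟩ else none)

/-- The restriction `η_{p,q}` of the Schützenberger involution to the primed interval
`[p,q]'`: apply `η` (for the alphabet `[q-p+1]'`) to `T^{p,q}` and leave the other
entries unchanged. -/
noncomputable def etaPQ (p q : ℕ) (T : Tab) : Tab := fun i j =>
  match T i j with
  | none => none
  | some a =>
      if p ≤ a.val ∧ a.val ≤ q then
        (eta (q + 1 - p) (restrictT p q T) i j).map (fun b => ⟨b.val + p - 1, b.primed⟩)
      else some a

/-! ## The shifted crystal reflection operators -/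

/-- The shifted crystal reflection operator `σ_i` (as a partial operator),
with `k = ⟨wt(T), α_i⟩`. -/
noncomputable def sigmaO (lam mu : List ℕ) (i : ℕ) (T : Tab) : Option Tab :=
  let k : ℤ := (wtT T i : ℤ) - (wtT T (i + 1) : ℤ)
  if 0 < k then
    if (FpT lam mu i T).isSome then (iterO (FT lam mu i) (k - 1).toNat T).bind (FpT lam mu i)
    else (iterO (FT lam mu i) (k + 1).toNat T).bind (EpT lam mu i)
  else if k = 0 then
    if (FpT lam mu i T).isSome then (FpT lam mu i T).bind (ET lam mu i)
    else if (FT lam mu i T).isSome then (FT lam mu i T).bind (EpT lam mu i)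
    else some T
  else
    if (FpT lam mu i T).isSome then (FpT lam mu i T).bind (iterO (ET lam mu i) (-k + 1).toNat)
    else (EpT lam mu i T).bind (iterO (ET lam mu i) (-k - 1).toNat)

/-- The shifted crystal reflection operator `σ_i` on `B(λ/μ, n)`. -/
noncomputable def sigmaT (lam mu : List ℕ) (i : ℕ) (T : Tab) : Tab :=
  (sigmaO lam mu i T).getD T

/-- The longest permutation of the interval `[a,b]`, as a function. -/
def theta (a b : ℕ) (i : ℕ) : ℕ := if a ≤ i ∧ i ≤ b then a + b - i else i

/-! Both identities are obtained by bubbling one letter at a time across a block. In (1),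
`b₁` travels left across `a_n, …, a₁` by inverse (K1) moves `a_{i-1} a_i b₁ ↦ a_{i-1} b₁ a_i`
(with `a₀ = c`), which are legal since `b₁ < c < a₁ < ⋯ < a_n`; then `b₁` takes over the role
of `c` for `b₂ ⋯ b_m`. In (2), `a_n` travels right across `b₁, …, b_m` by (K2) moves
`a_n b_j b_{j+1} ↦ b_j a_n b_{j+1}` (with `b_{m+1} = c`), and then `a_n` takes over the role
of `c` for `a₁ ⋯ a_{n-1}`.

Whether a letter precedes an equal letter in standardization depends only on which of the two
stands to the left, so instead of positions the order is recorded by the two relations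
`StdLTLeft` and `StdLTRight`. -/

/-- Encodes `1' < 1 < 2' < 2 < ⋯` as `2 < 3 < 4 < 5 < ⋯`; unprimed letters get odd ranks. -/
def PLetter.rank (a : PLetter) : ℕ := 2 * a.val + if a.primed then 0 else 1

theorem plt_iff_rank_lt {a b : PLetter} : plt a b ↔ a.rank < b.rank := by
  rcases a with ⟨v, _ | _⟩ <;> rcases b with ⟨w, _ | _⟩ <;>
    simp [plt, pltb, PLetter.rank] <;> omega

/-- When `x` stands to the left of `y` in a word, `x` comes before `y` in standardization. -/
def StdLTLeft (x y : PLetter) : Prop := sLT (x, 0) (y, 1)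

/-- When `x` stands to the right of `y` in a word, `x` comes before `y` in standardization. -/
def StdLTRight (x y : PLetter) : Prop := sLT (x, 1) (y, 0)

theorem sLT_iff_stdLTLeft {x y : PLetter} {i j : ℕ} (h : i < j) :
    sLT (x, i) (y, j) ↔ StdLTLeft x y := by
  simp [StdLTLeft, sLT, sLTb, h, h.not_gt]

theorem sLT_iff_stdLTRight {x y : PLetter} {i j : ℕ} (h : j < i) :
    sLT (x, i) (y, j) ↔ StdLTRight x y := by
  simp [StdLTRight, sLT, sLTb, h, h.not_gt]

theorem stdLTLeft_iff_rank {x y : PLetter} :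
    StdLTLeft x y ↔ x.rank < y.rank ∨ (x.rank = y.rank ∧ x.rank % 2 = 1) := by
  rcases x with ⟨v, _ | _⟩ <;> rcases y with ⟨w, _ | _⟩ <;>
    simp [StdLTLeft, sLT, sLTb, pltb, PLetter.rank] <;> omega

theorem stdLTRight_iff_rank {x y : PLetter} :
    StdLTRight x y ↔ x.rank < y.rank ∨ (x.rank = y.rank ∧ x.rank % 2 = 0) := by
  rcases x with ⟨v, _ | _⟩ <;> rcases y with ⟨w, _ | _⟩ <;>
    simp [StdLTRight, sLT, sLTb, pltb, PLetter.rank] <;> omega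

theorem StdLTLeft.trans {x y z : PLetter} (h₁ : StdLTLeft x y) (h₂ : StdLTLeft y z) :
    StdLTLeft x z := by
  rw [stdLTLeft_iff_rank] at *; omega

theorem StdLTRight.trans {x y z : PLetter} (h₁ : StdLTRight x y) (h₂ : StdLTRight y z) :
    StdLTRight x z := by
  rw [stdLTRight_iff_rank] at *; omega

instance : Trans StdLTLeft StdLTLeft StdLTLeft := ⟨StdLTLeft.trans⟩

instance : Trans (flip StdLTRight) (flip StdLTRight) (flip StdLTRight) :=
  ⟨fun h₁ h₂ => StdLTRight.trans h₂ h₁⟩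

theorem stdLTLeft_of_plt {x y : PLetter} (h : plt x y) : StdLTLeft x y :=
  stdLTLeft_iff_rank.2 (Or.inl (plt_iff_rank_lt.1 h))

theorem stdLTRight_of_plt {x y : PLetter} (h : plt x y) : StdLTRight x y :=
  stdLTRight_iff_rank.2 (Or.inl (plt_iff_rank_lt.1 h))

theorem plt_of_stdLTRight_of_stdLTLeft {x y z : PLetter} (h₁ : StdLTRight x y)
    (h₂ : StdLTLeft y z) : plt x z := by
  rw [stdLTRight_iff_rank] at h₁; rw [stdLTLeft_iff_rank] at h₂; rw [plt_iff_rank_lt]; omega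

theorem plt_of_stdLTLeft_of_stdLTRight {x y z : PLetter} (h₁ : StdLTLeft x y)
    (h₂ : StdLTRight y z) : plt x z := by
  rw [stdLTLeft_iff_rank] at h₁; rw [stdLTRight_iff_rank] at h₂; rw [plt_iff_rank_lt]; omega

theorem KMoveK.append_append {w v : Word} (h : KMoveK w v) (pre suf : Word) :
    KMoveK (pre ++ w ++ suf) (pre ++ v ++ suf) := by
  cases h with
  | K1 x y a b c h₁ h₂ => simpa using KMoveK.K1 (pre ++ x) (y ++ suf) a b c h₁ h₂
  | K2 x y a b c h₁ h₂ => simpa using KMoveK.K2 (pre ++ x) (y ++ suf) a b c h₁ h₂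

theorem KnuthEquivK.append_append {w v : Word} (h : KnuthEquivK w v) (pre suf : Word) :
    KnuthEquivK (pre ++ w ++ suf) (pre ++ v ++ suf) := by
  induction h with
  | refl w => exact .refl _
  | move m => exact .move (m.append_append pre suf)
  | symm _ ih => exact ih.symm
  | trans _ _ ih₁ ih₂ => exact ih₁.trans ih₂

theorem KnuthEquivK.toKnuthEquiv {w v : Word} (h : KnuthEquivK w v) : KnuthEquiv w v := by
  induction h with
  | refl w => exact .refl w
  | move m => exact .move (.ofK m)
  | symm _ ih => exact ih.symm
  | trans _ _ ih₁ ih₂ => exact ih₁.trans ih₂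

instance : Trans KnuthEquivK KnuthEquivK KnuthEquivK := ⟨KnuthEquivK.trans⟩

theorem knuthEquivK_K1 {a b c : PLetter} (hab : StdLTRight a b) (hbc : StdLTLeft b c) :
    KnuthEquivK [b, c, a] [b, a, c] :=
  .symm <| by simpa using KnuthEquivK.move (KMoveK.K1 [] [] a b c
    ((sLT_iff_stdLTRight (by omega)).2 hab) ((sLT_iff_stdLTLeft (by omega)).2 hbc))

theorem knuthEquivK_K2 {a b c : PLetter} (hab : StdLTLeft a b) (hbc : StdLTRight b c) :
    KnuthEquivK [a, c, b] [c, a, b] := by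
  simpa using KnuthEquivK.move (KMoveK.K2 [] [] a b c
    ((sLT_iff_stdLTLeft (by omega)).2 hab) ((sLT_iff_stdLTRight (by omega)).2 hbc))

theorem knuthEquivK_bubble_left {p x : PLetter} {as : Word} (hA : (p :: as).Pairwise StdLTLeft)
    (hx : ∀ y ∈ p :: as, StdLTRight x y) :
    KnuthEquivK (p :: (as ++ [x])) (p :: x :: as) := by
  induction as generalizing p with
  | nil => exact .refl _
  | cons z as ih =>
    obtain ⟨hpz, hzas⟩ := List.pairwise_cons.1 hA
    calc KnuthEquivK (p :: (z :: as ++ [x])) (p :: z :: x :: as) := by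
          simpa using (ih hzas fun y hy => hx y (List.mem_cons_of_mem p hy)).append_append [p] []
      KnuthEquivK _ (p :: x :: z :: as) := by
          simpa using (knuthEquivK_K1 (hx p List.mem_cons_self)
            (hpz z List.mem_cons_self)).append_append [] as

theorem knuthEquivK_bubble_right {p x : PLetter} {bs : Word}
    (hB : (bs ++ [p]).Pairwise (flip StdLTRight)) (hx : ∀ y ∈ bs ++ [p], StdLTLeft x y) :
    KnuthEquivK (x :: (bs ++ [p])) (bs ++ [x, p]) := by
  induction bs using List.reverseRecOn generalizing p with
  | nil => exact .refl _
  | append_singleton bs b ih =>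
    have hB' : (bs ++ [b]).Pairwise (flip StdLTRight) := hB.sublist (by simp)
    have hpb : StdLTRight p b := (List.pairwise_append.1 hB).2.2 b (by simp) p (by simp)
    calc KnuthEquivK (x :: (bs ++ [b] ++ [p])) (bs ++ [x, b] ++ [p]) := by
          simpa using (ih hB' fun y hy => hx y (List.mem_append_left [p] hy)).append_append [] [p]
      KnuthEquivK _ (bs ++ [b] ++ [x, p]) := by
          simpa using (knuthEquivK_K2 (hx p (by simp)) hpb).append_append bs []

theorem knuthEquivK_cons_append_comm {p : PLetter} {as bs : Word}
    (hA : (p :: as).Pairwise StdLTLeft) (hB : (p :: bs).Pairwise (flip StdLTRight)) :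
    KnuthEquivK (p :: (as ++ bs)) (p :: (bs ++ as)) := by
  induction bs generalizing p with
  | nil => simpa using KnuthEquivK.refl (p :: as)
  | cons b bs ih =>
    obtain ⟨hpa, has⟩ := List.pairwise_cons.1 hA
    obtain ⟨hpb, hbs⟩ := List.pairwise_cons.1 hB
    have hbp : StdLTRight b p := hpb b List.mem_cons_self
    have hba : ∀ a ∈ as, plt b a := fun a ha => plt_of_stdLTRight_of_stdLTLeft hbp (hpa a ha)
    have hbpas : ∀ y ∈ p :: as, StdLTRight b y := by
      simpa [hbp] using fun a ha => stdLTRight_of_plt (hba a ha)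
    have hbas : (b :: as).Pairwise StdLTLeft :=
      List.pairwise_cons.2 ⟨fun a ha => stdLTLeft_of_plt (hba a ha), has⟩
    calc KnuthEquivK (p :: (as ++ b :: bs)) (p :: b :: as ++ bs) := by
          simpa using (knuthEquivK_bubble_left hA hbpas).append_append [] bs
      KnuthEquivK _ (p :: (b :: bs ++ as)) := by
          simpa using (ih hbas hbs).append_append [p] []

theorem knuthEquivK_append_append_comm {p : PLetter} {as bs : Word}
    (hA : (as ++ [p]).Pairwise StdLTLeft) (hB : (bs ++ [p]).Pairwise (flip StdLTRight)) :
    KnuthEquivK (as ++ bs ++ [p]) (bs ++ as ++ [p]) := by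
  induction as using List.reverseRecOn generalizing p with
  | nil => simpa using KnuthEquivK.refl (bs ++ [p])
  | append_singleton as x ih =>
    obtain ⟨hbs, -, hpbs⟩ := List.pairwise_append.1 hB
    have hxp : StdLTLeft x p := (List.pairwise_append.1 hA).2.2 x (by simp) p (by simp)
    have hxb : ∀ b ∈ bs, plt x b := fun b hb =>
      plt_of_stdLTLeft_of_stdLTRight hxp (hpbs b hb p (by simp))
    have hxbsp : ∀ y ∈ bs ++ [p], StdLTLeft x y := by
      simp only [List.mem_append, List.mem_singleton]
      rintro y (hy | rfl)
      exacts [stdLTLeft_of_plt (hxb y hy), hxp]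
    have hbsx : (bs ++ [x]).Pairwise (flip StdLTRight) :=
      List.pairwise_append.2 ⟨hbs, List.pairwise_singleton _ _, by
        simpa [flip] using fun b hb => stdLTRight_of_plt (hxb b hb)⟩
    calc KnuthEquivK (as ++ [x] ++ bs ++ [p]) (as ++ (bs ++ [x, p])) := by
          simpa using (knuthEquivK_bubble_right hB hxbsp).append_append as []
      KnuthEquivK _ (bs ++ (as ++ [x]) ++ [p]) := by
          simpa using (ih (hA.sublist (by simp)) hbsx).append_append [] [p]

section getD

variable {R : PLetter → PLetter → Prop}

theorem isChain_of_getD {l : Word}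
    (h : ∀ k, k + 1 < l.length → R (l.getD k dummy) (l.getD (k + 1) dummy)) : l.IsChain R := by
  rw [List.isChain_iff_getElem]
  intro k hk
  have := h k hk
  rwa [List.getD_eq_getElem _ _ (Nat.lt_of_succ_lt hk), List.getD_eq_getElem _ _ hk] at this

theorem isChain_cons_of_getD {c : PLetter} {l : Word}
    (h₀ : 0 < l.length → R c (l.getD 0 dummy))
    (h : ∀ k, k + 1 < l.length → R (l.getD k dummy) (l.getD (k + 1) dummy)) :
    (c :: l).IsChain R := by
  refine List.isChain_cons.2 ⟨fun y hy => ?_, isChain_of_getD h⟩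
  cases l with
  | nil => simp at hy
  | cons a l => simpa [Option.mem_some_iff.1 hy] using h₀ (by simp)

theorem isChain_append_singleton_of_getD {c : PLetter} {l : Word}
    (h : ∀ k, k + 1 < l.length → R (l.getD k dummy) (l.getD (k + 1) dummy))
    (hlast : 0 < l.length → R (l.getD (l.length - 1) dummy) c) :
    (l ++ [c]).IsChain R := by
  refine List.isChain_append.2 ⟨isChain_of_getD h, .singleton c, fun x hx y hy => ?_⟩
  rw [List.getLast?_eq_getElem?] at hx
  obtain ⟨hlt, rfl⟩ := List.getElem?_eq_some_iff.1 hx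
  have := hlast (by omega)
  rwa [List.getD_eq_getElem _ _ hlt, Option.mem_some_iff.1 hy] at this

end getD

theorem knuth_block_commute_general (c : PLetter) (as bs : Word) :
    (((∀ k, k + 1 < bs.length →
          sLT (bs.getD (k + 1) dummy, as.length + k + 2)
            (bs.getD k dummy, as.length + k + 1)) ∧
        sLT (bs.getD 0 dummy, as.length + 1) (c, 0) ∧
        sLT (c, 0) (as.getD 0 dummy, 1) ∧
        (∀ k, k + 1 < as.length →
          sLT (as.getD k dummy, k + 1) (as.getD (k + 1) dummy, k + 2))) →
      KnuthEquiv (c :: (as ++ bs)) (c :: (bs ++ as))) ∧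
    (((∀ k, k + 1 < as.length →
          sLT (as.getD k dummy, k) (as.getD (k + 1) dummy, k + 1)) ∧
        sLT (as.getD (as.length - 1) dummy, as.length - 1)
          (c, as.length + bs.length) ∧
        sLT (c, as.length + bs.length)
          (bs.getD (bs.length - 1) dummy, as.length + bs.length - 1) ∧
        (∀ k, k + 1 < bs.length →
          sLT (bs.getD (k + 1) dummy, as.length + k + 1)
            (bs.getD k dummy, as.length + k))) →
      KnuthEquiv (as ++ bs ++ [c]) (bs ++ as ++ [c])) := by
  constructor
  · rintro ⟨hbs, hbc, hca, has⟩
    have hA : (c :: as).IsChain StdLTLeft := isChain_cons_of_getD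
      (fun _ => (sLT_iff_stdLTLeft (by omega)).1 hca)
      (fun k hk => (sLT_iff_stdLTLeft (by omega)).1 (has k hk))
    have hB : (c :: bs).IsChain (flip StdLTRight) := isChain_cons_of_getD
      (fun _ => (sLT_iff_stdLTRight (by omega)).1 hbc)
      (fun k hk => (sLT_iff_stdLTRight (by omega)).1 (hbs k hk))
    exact (knuthEquivK_cons_append_comm hA.pairwise hB.pairwise).toKnuthEquiv
  · rintro ⟨has, hac, hcb, hbs⟩
    have hA : (as ++ [c]).IsChain StdLTLeft := isChain_append_singleton_of_getD
      (fun k hk => (sLT_iff_stdLTLeft (by omega)).1 (has k hk))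
      (fun _ => (sLT_iff_stdLTLeft (by omega)).1 hac)
    have hB : (bs ++ [c]).IsChain (flip StdLTRight) := isChain_append_singleton_of_getD
      (fun k hk => (sLT_iff_stdLTRight (by omega)).1 (hbs k hk))
      (fun _ => (sLT_iff_stdLTRight (by omega)).1 hcb)
    exact (knuthEquivK_append_append_comm hA.pairwise hB.pairwise).toKnuthEquiv

/-- Let `a₁,…,a_L, b₁,…,b_M, c` be letters of `[n]'` with `L, M ≥ 1`.
(1) If `b_M < ⋯ < b_1 < c < a_1 < ⋯ < a_L` in standardization order (positions taken in
the word `c a₁ ⋯ a_L b₁ ⋯ b_M`), then `c a₁ ⋯ a_L b₁ ⋯ b_M ≡_k c b₁ ⋯ b_M a₁ ⋯ a_L`.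
(2) If `a_1 < ⋯ < a_L < c < b_M < ⋯ < b_1` in standardization order (positions taken in
the word `a₁ ⋯ a_L b₁ ⋯ b_M c`), then `a₁ ⋯ a_L b₁ ⋯ b_M c ≡_k b₁ ⋯ b_M a₁ ⋯ a_L c`. -/
theorem knuth_block_commute (n : ℕ) (c : PLetter) (as bs : Word)
    (hc : 1 ≤ c.val ∧ c.val ≤ n)
    (hasn : ∀ a ∈ as, 1 ≤ a.val ∧ a.val ≤ n) (hbsn : ∀ a ∈ bs, 1 ≤ a.val ∧ a.val ≤ n)
    (hL : 1 ≤ as.length) (hM : 1 ≤ bs.length) :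
    (((∀ k, k + 1 < bs.length →
          sLT (bs.getD (k + 1) dummy, as.length + k + 2)
            (bs.getD k dummy, as.length + k + 1)) ∧
        sLT (bs.getD 0 dummy, as.length + 1) (c, 0) ∧
        sLT (c, 0) (as.getD 0 dummy, 1) ∧
        (∀ k, k + 1 < as.length →
          sLT (as.getD k dummy, k + 1) (as.getD (k + 1) dummy, k + 2))) →
      KnuthEquiv (c :: (as ++ bs)) (c :: (bs ++ as))) ∧
    (((∀ k, k + 1 < as.length →
          sLT (as.getD k dummy, k) (as.getD (k + 1) dummy, k + 1)) ∧
        sLT (as.getD (as.length - 1) dummy, as.length - 1)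
          (c, as.length + bs.length) ∧
        sLT (c, as.length + bs.length)
          (bs.getD (bs.length - 1) dummy, as.length + bs.length - 1) ∧
        (∀ k, k + 1 < bs.length →
          sLT (bs.getD (k + 1) dummy, as.length + k + 1)
            (bs.getD k dummy, as.length + k))) →
      KnuthEquiv (as ++ bs ++ [c]) (bs ++ as ++ [c])) :=
  knuth_block_commute_general c as bs

end ST
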